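/- Let g : [0,1] → ℝ be three times differentiable with g'' > 0 on [0,1], and suppose |g'''(t)| ≤ 2θ·tan(2tθ)·g''(t) for all t ∈ [0,1], where 0 < θ < π/4. Then g(1) - g(0) - g'(0) ≥ (g''(0)/2)·(sin²θ)/θ². -/

import Mathlib

/-!
Set `ω = 2θ`. The hypothesis `g''' ≥ -ω tan(ωt) g''` says exactly that `g''(t) / cos(ωt)` is
nondecreasing, so `g''(t) ≥ g''(0) cos(ωt)` on `[0,1]`. Integrating this twice gives
`g(1) - g(0) - g'(0) ≥ g''(0) (1 - cos ω) / ω²`, and `1 - cos 2θ = 2 sin² θ`.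
-/

open Real Set

lemma monotoneOn_Icc_of_hasDerivAt_nonneg {f f' : ℝ → ℝ} {a b : ℝ}
    (hf : ∀ t ∈ Icc a b, HasDerivAt f (f' t) t) (hf' : ∀ t ∈ Icc a b, 0 ≤ f' t) :
    MonotoneOn f (Icc a b) :=
  monotoneOn_of_hasDerivWithinAt_nonneg (convex_Icc a b)
    (fun t ht => (hf t ht).continuousAt.continuousWithinAt)
    (fun t ht => (hf t (interior_subset ht)).hasDerivWithinAt)
    (fun t ht => hf' t (interior_subset ht))

lemma sub_le_sub_of_hasDerivAt_le {f g f' g' : ℝ → ℝ} {a b : ℝ} (hab : a ≤ b)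
    (hf : ∀ t ∈ Icc a b, HasDerivAt f (f' t) t) (hg : ∀ t ∈ Icc a b, HasDerivAt g (g' t) t)
    (hle : ∀ t ∈ Icc a b, f' t ≤ g' t) :
    f b - f a ≤ g b - g a := by
  have hmono : MonotoneOn (fun t => g t - f t) (Icc a b) :=
    monotoneOn_Icc_of_hasDerivAt_nonneg (fun t ht => (hg t ht).sub (hf t ht))
      (fun t ht => sub_nonneg.2 (hle t ht))
  linarith [hmono (left_mem_Icc.2 hab) (right_mem_Icc.2 hab) hab]

lemma ContDiff.hasDerivAt_iteratedDeriv {f : ℝ → ℝ} {n : WithTop ℕ∞} {m : ℕ}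
    (hf : ContDiff ℝ n f) (hm : m < n) (x : ℝ) :
    HasDerivAt (iteratedDeriv m f) (iteratedDeriv (m + 1) f x) x := by
  rw [iteratedDeriv_succ]
  exact (hf.differentiable_iteratedDeriv m hm x).hasDerivAt

lemma cos_pos_of_mul_mem_Icc {ω T t : ℝ} (hω : 0 ≤ ω) (hωT : ω * T < π / 2)
    (ht : t ∈ Icc 0 T) : 0 < cos (ω * t) :=
  cos_pos_of_mem_Ioo ⟨by nlinarith [pi_pos, ht.1], by nlinarith [ht.2]⟩

lemma mul_cos_le_of_neg_tan_le_deriv {u u' : ℝ → ℝ} {ω T : ℝ} (hω : 0 ≤ ω)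
    (hωT : ω * T < π / 2) (hu : ∀ t ∈ Icc 0 T, HasDerivAt u (u' t) t)
    (hle : ∀ t ∈ Icc 0 T, -(ω * tan (ω * t) * u t) ≤ u' t) :
    ∀ t ∈ Icc 0 T, u 0 * cos (ω * t) ≤ u t := by
  have hcos : ∀ t ∈ Icc 0 T, 0 < cos (ω * t) := fun t ht => cos_pos_of_mul_mem_Icc hω hωT ht
  have hcosd : ∀ t, HasDerivAt (fun t => cos (ω * t)) (-sin (ω * t) * ω) t := fun t => by
    simpa using ((hasDerivAt_id' t).const_mul ω).cos
  have hmono : MonotoneOn (fun t => u t / cos (ω * t)) (Icc 0 T) := by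
    refine monotoneOn_Icc_of_hasDerivAt_nonneg
      (fun t ht => (hu t ht).div (hcosd t) (hcos t ht).ne') (fun t ht => ?_)
    have hc := hcos t ht
    have hsin : tan (ω * t) * cos (ω * t) = sin (ω * t) := by
      rw [tan_eq_sin_div_cos]; field_simp
    have hmul := mul_le_mul_of_nonneg_right (hle t ht) hc.le
    have hrw : -(ω * tan (ω * t) * u t) * cos (ω * t) = -(ω * u t * sin (ω * t)) := by
      rw [← hsin]; ring
    apply div_nonneg _ (by positivity)
    linarith
  intro t ht
  have hT : 0 ≤ T := ht.1.trans ht.2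
  have h := hmono (left_mem_Icc.2 hT) ht ht.1
  have hc := hcos t ht
  simp only [mul_zero, cos_zero, div_one] at h
  calc u 0 * cos (ω * t) ≤ u t / cos (ω * t) * cos (ω * t) := by gcongr
    _ = u t := div_mul_cancel₀ _ hc.ne'

lemma mul_one_sub_cos_div_le_of_mul_cos_le {u u' u'' : ℝ → ℝ} {c ω T : ℝ} (hω : ω ≠ 0)
    (hT : 0 ≤ T) (hu : ∀ t ∈ Icc 0 T, HasDerivAt u (u' t) t)
    (hu' : ∀ t ∈ Icc 0 T, HasDerivAt u' (u'' t) t)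
    (hle : ∀ t ∈ Icc 0 T, c * cos (ω * t) ≤ u'' t) :
    c * (1 - cos (ω * T)) / ω ^ 2 ≤ u T - u 0 - u' 0 * T := by
  have hsin : ∀ t, HasDerivAt (fun t => c * sin (ω * t) / ω) (c * cos (ω * t)) t := fun t =>
    ((((hasDerivAt_id' t).const_mul ω).sin).const_mul c).div_const ω |>.congr_deriv
      (by field_simp)
  have hcos : ∀ t, HasDerivAt (fun t => u' 0 * t - c * cos (ω * t) / ω ^ 2)
      (u' 0 + c * sin (ω * t) / ω) t := fun t =>
    ((hasDerivAt_id' t).const_mul (u' 0)).sub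
      (((((hasDerivAt_id' t).const_mul ω).cos).const_mul c).div_const (ω ^ 2)) |>.congr_deriv
      (by field_simp; ring)
  have hfirst : ∀ t ∈ Icc 0 T, u' 0 + c * sin (ω * t) / ω ≤ u' t := by
    intro t ht
    have := sub_le_sub_of_hasDerivAt_le ht.1 (fun s _ => hsin s)
      (fun s hs => hu' s ⟨hs.1, hs.2.trans ht.2⟩) (fun s hs => hle s ⟨hs.1, hs.2.trans ht.2⟩)
    simp only [mul_zero, sin_zero, zero_div] at this
    linarith
  have := sub_le_sub_of_hasDerivAt_le hT (fun t _ => hcos t) hu hfirst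
  simp only [mul_zero, cos_zero] at this
  have hsplit : c * (1 - cos (ω * T)) / ω ^ 2 = c * 1 / ω ^ 2 - c * cos (ω * T) / ω ^ 2 := by
    ring
  linarith

theorem stmt_1_general (g : ℝ → ℝ) (θ : ℝ) (hθ0 : 0 < θ) (hθ : θ < π / 4)
    (hg : ContDiff ℝ 3 g)
    (hsc : ∀ t ∈ Set.Icc (0:ℝ) 1,
      |iteratedDeriv 3 g t| ≤ 2 * θ * Real.tan (2 * t * θ) * iteratedDeriv 2 g t) :
    g 1 - g 0 - deriv g 0 ≥
      (iteratedDeriv 2 g 0 / 2) * (Real.sin θ ^ 2 / θ ^ 2) := by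
  have hd1 : ∀ t, HasDerivAt g (deriv g t) t := fun t => by
    simpa using hg.hasDerivAt_iteratedDeriv (m := 0) (by norm_num) t
  have hd2 : ∀ t, HasDerivAt (deriv g) (iteratedDeriv 2 g t) t := fun t => by
    simpa using hg.hasDerivAt_iteratedDeriv (m := 1) (by norm_num) t
  have hd3 : ∀ t, HasDerivAt (iteratedDeriv 2 g) (iteratedDeriv 3 g t) t :=
    hg.hasDerivAt_iteratedDeriv (by norm_num)
  have hlower : ∀ t ∈ Icc (0:ℝ) 1, iteratedDeriv 2 g 0 * cos (2 * θ * t) ≤ iteratedDeriv 2 g t :=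
    mul_cos_le_of_neg_tan_le_deriv (by positivity) (by linarith) (fun t _ => hd3 t)
      fun t ht => by
        have := neg_le_of_abs_le (hsc t ht)
        rwa [show 2 * t * θ = 2 * θ * t by ring] at this
  have hcos : 1 - cos (2 * θ * 1) = 2 * sin θ ^ 2 := by
    rw [mul_one, cos_two_mul, cos_sq']; ring
  calc iteratedDeriv 2 g 0 / 2 * (sin θ ^ 2 / θ ^ 2)
      = iteratedDeriv 2 g 0 * (1 - cos (2 * θ * 1)) / (2 * θ) ^ 2 := by
        rw [hcos]; field_simp
    _ ≤ g 1 - g 0 - deriv g 0 * 1 :=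
        mul_one_sub_cos_div_le_of_mul_cos_le (by positivity) zero_le_one
          (fun t _ => hd1 t) (fun t _ => hd2 t) hlower
    _ = g 1 - g 0 - deriv g 0 := by rw [mul_one]

theorem stmt_1 (g : ℝ → ℝ) (θ : ℝ) (hθ0 : 0 < θ) (hθ : θ < π / 4)
    (hg : ContDiff ℝ 3 g)
    (hpos : ∀ t ∈ Set.Icc (0:ℝ) 1, 0 < iteratedDeriv 2 g t)
    (hsc : ∀ t ∈ Set.Icc (0:ℝ) 1,
      |iteratedDeriv 3 g t| ≤ 2 * θ * Real.tan (2 * t * θ) * iteratedDeriv 2 g t) :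
    g 1 - g 0 - deriv g 0 ≥
      (iteratedDeriv 2 g 0 / 2) * (Real.sin θ ^ 2 / θ ^ 2) :=
  stmt_1_general g θ hθ0 hθ hg hsc
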